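/- Let X₁,…,Xₙ and R₁,…,Rₙ be finitely-valued random variables taking values in an additive abelian group, such that the 2n variables X₁,…,Xₙ,R₁,…,Rₙ are mutually independent, and let g be a function into the same group. Suppose that for each i, I(X_i ; g(X_i) + R_i) = 0. Then for each i, I(X_i ; (g(X₁)+R₁, …, g(Xₙ)+Rₙ, ∑_{j=1}^n R_j)) = I(X_i ; ∑_{j=1}^n g(X_j)). -/

import Mathlib

/-!
The masking hypothesis is the equality case of Gibbs' inequality: it forces `X j` and
`Y j := g (X j) + R j` to be independent, so that `X 1, …, X n, Y 1, …, Y n` are mutually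
independent. Since `∑ R j = ∑ Y j - S` with `S := ∑ g (X j)`, the joint law of `X i` and the
observation `W = (Y, ∑ R j)` factors as
`P(X i = x, W = (y, t)) = (∏ P(Y j = y j)) * P(X i = x, S = ∑ y j - t)`.
Thus `S` is a function of `W` and `X i` is conditionally independent of `W` given `S`; the
entropy of `W` given `S` then cancels from both `H(W)` and `H(X i, W)`.
-/

/-- Probability that a finitely-valued random variable `X` takes the value `s`. -/
noncomputable def pr {Ω S : Type*} [Fintype Ω] [DecidableEq S]
    (p : Ω → ℝ) (X : Ω → S) (s : S) : ℝ :=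
  ∑ ω, if X ω = s then p ω else 0

/-- Shannon entropy of a finitely-valued random variable. -/
noncomputable def entropy {Ω S : Type*} [Fintype Ω] [Fintype S] [DecidableEq S]
    (p : Ω → ℝ) (X : Ω → S) : ℝ :=
  ∑ s, Real.negMulLog (pr p X s)

/-- Mutual information `I(X;Y) = H(X) + H(Y) − H(X,Y)`. -/
noncomputable def mutualInfo {Ω S T : Type*} [Fintype Ω] [Fintype S] [Fintype T]
    [DecidableEq S] [DecidableEq T] (p : Ω → ℝ) (X : Ω → S) (Y : Ω → T) : ℝ :=
  entropy p X + entropy p Y - entropy p (fun ω => (X ω, Y ω))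

open Finset Real InformationTheory

lemma mul_klFun_div_mul {x y z : ℝ} (hx : 0 < x) (hy : 0 < y) (hz : 0 < z) :
    y * z * klFun (x / (y * z)) = y * z - x + x * (log x - log y - log z) := by
  rw [klFun_apply, log_div hx.ne' (by positivity), log_mul hy.ne' hz.ne']
  field_simp
  ring

-- The logarithms are kept apart because `log 0 = 0` breaks `log (y * z) = log y + log z`.
lemma gibbs_term_nonneg {x y z : ℝ} (hx : 0 ≤ x) (hxy : x ≤ y) (hxz : x ≤ z) :
    0 ≤ y * z - x + x * (log x - log y - log z) := by
  rcases hx.eq_or_lt with rfl | hx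
  · simpa using mul_nonneg hxy hxz
  · rw [← mul_klFun_div_mul hx (hx.trans_le hxy) (hx.trans_le hxz)]
    exact mul_nonneg (by nlinarith) (klFun_nonneg (div_nonneg hx.le (by nlinarith)))

lemma eq_mul_of_gibbs_term_eq_zero {x y z : ℝ} (hx : 0 ≤ x) (hxy : x ≤ y) (hxz : x ≤ z)
    (h : y * z - x + x * (log x - log y - log z) = 0) : x = y * z := by
  rcases hx.eq_or_lt with rfl | hx
  · simpa [eq_comm] using h
  · have hyz : 0 < y * z := mul_pos (hx.trans_le hxy) (hx.trans_le hxz)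
    rw [← mul_klFun_div_mul hx (hx.trans_le hxy) (hx.trans_le hxz), mul_eq_zero,
      klFun_eq_zero_iff (by positivity), div_eq_one_iff_eq hyz.ne'] at h
    exact h.resolve_left hyz.ne'

section pr

variable {Ω S T : Type*} [Fintype Ω] [DecidableEq S] [DecidableEq T] {p : Ω → ℝ}

lemma pr_nonneg (hp : ∀ ω, 0 ≤ p ω) (X : Ω → S) (s : S) : 0 ≤ pr p X s :=
  sum_nonneg fun ω _ => by split_ifs <;> simp [hp ω]

lemma sum_pr [Fintype S] (hp1 : ∑ ω, p ω = 1) (X : Ω → S) : ∑ s, pr p X s = 1 := by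
  simp [pr, sum_comm (γ := S), hp1]

lemma pr_congr {A : Ω → S} {B : Ω → T} {s : S} {t : T} (h : ∀ ω, A ω = s ↔ B ω = t) :
    pr p A s = pr p B t :=
  sum_congr rfl fun ω _ => if_congr (h ω) rfl rfl

lemma pr_comp [Fintype S] (Z : Ω → S) (F : S → T) (t : T) :
    pr p (fun ω => F (Z ω)) t = ∑ s, if F s = t then pr p Z s else 0 := by
  rw [← sum_filter]
  unfold pr
  rw [sum_comm]
  simp

lemma sum_pr_prod_mk_right [Fintype T] (A : Ω → S) (B : Ω → T) (a : S) :
    ∑ b, pr p (fun ω => (A ω, B ω)) (a, b) = pr p A a := by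
  unfold pr
  rw [sum_comm]
  refine sum_congr rfl fun ω _ => ?_
  by_cases h : A ω = a <;> simp [h]

lemma sum_pr_prod_mk_left [Fintype S] (A : Ω → S) (B : Ω → T) (b : T) :
    ∑ a, pr p (fun ω => (A ω, B ω)) (a, b) = pr p B b := by
  unfold pr
  rw [sum_comm]
  refine sum_congr rfl fun ω _ => ?_
  by_cases h : B ω = b <;> simp [h]

lemma pr_prod_mk_le_left [Fintype T] (hp : ∀ ω, 0 ≤ p ω) (A : Ω → S) (B : Ω → T)
    (a : S) (b : T) :
    pr p (fun ω => (A ω, B ω)) (a, b) ≤ pr p A a :=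
  sum_pr_prod_mk_right A B a ▸
    single_le_sum (f := fun b => pr p _ (a, b)) (fun _ _ => pr_nonneg hp _ _) (mem_univ b)

lemma pr_prod_mk_le_right [Fintype S] (hp : ∀ ω, 0 ≤ p ω) (A : Ω → S) (B : Ω → T)
    (a : S) (b : T) :
    pr p (fun ω => (A ω, B ω)) (a, b) ≤ pr p B b :=
  sum_pr_prod_mk_left A B b ▸
    single_le_sum (f := fun a => pr p _ (a, b)) (fun _ _ => pr_nonneg hp _ _) (mem_univ a)

lemma sum_mul_log_pr_eq_neg_entropy [Fintype S] (X : Ω → S) :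
    ∑ s, pr p X s * log (pr p X s) = -entropy p X := by
  simp [entropy, negMulLog, ← sum_neg_distrib]

lemma sum_gibbs_term_eq_mutualInfo [Fintype S] [Fintype T] (hp1 : ∑ ω, p ω = 1)
    (A : Ω → S) (B : Ω → T) :
    ∑ v : S × T, (pr p A v.1 * pr p B v.2 - pr p (fun ω => (A ω, B ω)) v +
      pr p (fun ω => (A ω, B ω)) v * (log (pr p (fun ω => (A ω, B ω)) v) - log (pr p A v.1) -
        log (pr p B v.2))) = mutualInfo p A B := by
  have h_prod : ∑ v : S × T, pr p A v.1 * pr p B v.2 = 1 := by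
    rw [Fintype.sum_prod_type, ← sum_mul_sum, sum_pr hp1, sum_pr hp1, one_mul]
  have h_left :
      ∑ v : S × T, pr p (fun ω => (A ω, B ω)) v * log (pr p A v.1) = -entropy p A := by
    simp only [Fintype.sum_prod_type, ← sum_mul, sum_pr_prod_mk_right,
      sum_mul_log_pr_eq_neg_entropy]
  have h_right :
      ∑ v : S × T, pr p (fun ω => (A ω, B ω)) v * log (pr p B v.2) = -entropy p B := by
    rw [Fintype.sum_prod_type, sum_comm]
    simp only [← sum_mul, sum_pr_prod_mk_left, sum_mul_log_pr_eq_neg_entropy]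
  simp only [mul_sub, sum_add_distrib, sum_sub_distrib, h_prod, h_left, h_right, sum_pr hp1,
    sum_mul_log_pr_eq_neg_entropy, mutualInfo]
  ring

lemma pr_prod_mk_eq_mul_of_mutualInfo_eq_zero [Fintype S] [Fintype T] (hp : ∀ ω, 0 ≤ p ω)
    (hp1 : ∑ ω, p ω = 1) {A : Ω → S} {B : Ω → T} (h : mutualInfo p A B = 0)
    (a : S) (b : T) :
    pr p (fun ω => (A ω, B ω)) (a, b) = pr p A a * pr p B b := by
  have hle_left := pr_prod_mk_le_left hp A B
  have hle_right := pr_prod_mk_le_right hp A B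
  rw [← sum_gibbs_term_eq_mutualInfo hp1, sum_eq_zero_iff_of_nonneg fun v _ =>
    gibbs_term_nonneg (pr_nonneg hp _ v) (hle_left v.1 v.2) (hle_right v.1 v.2)] at h
  exact eq_mul_of_gibbs_term_eq_zero (pr_nonneg hp _ _) (hle_left a b) (hle_right a b)
    (h (a, b) (mem_univ _))

end pr

section entropy

variable {Ω S T U W : Type*} [Fintype Ω] [Fintype S] [Fintype T] [Fintype U] [Fintype W]
  [DecidableEq S] [DecidableEq T] [DecidableEq U]

lemma sum_negMulLog_mul_comp (F : W → U) (c : W → ℝ) (q : U → ℝ)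
    (hc : ∀ u, ∑ w with F w = u, c w = 1) :
    ∑ w, negMulLog (c w * q (F w)) =
      ∑ u, negMulLog (q u) + ∑ w, q (F w) * negMulLog (c w) := by
  simp only [negMulLog_mul, sum_add_distrib]
  rw [add_comm, ← sum_fiberwise univ F (fun w => c w * negMulLog (q (F w)))]
  congr 1
  refine sum_congr rfl fun u _ => ?_
  rw [sum_congr rfl fun w hw => by rw [(mem_filter.1 hw).2], ← sum_mul, hc, one_mul]

/-- `h` says that `X` and `W` are conditionally independent given `f ∘ W`, `c w` being the
conditional probability of `w` given `f w`. -/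
lemma mutualInfo_eq_of_pr_factor (p : Ω → ℝ) (X : Ω → S) (W : Ω → T) (f : T → U)
    (c : T → ℝ) (hc : ∀ u, ∑ w with f w = u, c w = 1)
    (h : ∀ x w, pr p (fun ω => (X ω, W ω)) (x, w) =
      c w * pr p (fun ω => (X ω, f (W ω))) (x, f w)) :
    mutualInfo p X W = mutualInfo p X (fun ω => f (W ω)) := by
  have hW : ∀ w, pr p W w = c w * pr p (fun ω => f (W ω)) (f w) := fun w => by
    rw [← sum_pr_prod_mk_left X W, ← sum_pr_prod_mk_left X (fun ω => f (W ω)), mul_sum]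
    exact sum_congr rfl fun x _ => h x w
  have h_entropy_W : entropy p W = entropy p (fun ω => f (W ω)) +
      ∑ w, pr p (fun ω => f (W ω)) (f w) * negMulLog (c w) := by
    simp only [entropy, hW]
    exact sum_negMulLog_mul_comp f c _ hc
  have h_entropy_XW : entropy p (fun ω => (X ω, W ω)) = entropy p (fun ω => (X ω, f (W ω))) +
      ∑ w, pr p (fun ω => f (W ω)) (f w) * negMulLog (c w) := by
    have hc' : ∀ v : S × U, ∑ xw : S × T with (xw.1, f xw.2) = v, c xw.2 = 1 := by
      rintro ⟨x, u⟩
      simpa [sum_filter, Fintype.sum_prod_type, ite_and] using hc u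
    simp only [entropy, h]
    rw [sum_negMulLog_mul_comp (fun xw : S × T => (xw.1, f xw.2)) (fun xw => c xw.2) _ hc']
    congr 1
    rw [Fintype.sum_prod_type, sum_comm]
    simp only [← sum_mul, sum_pr_prod_mk_left]
  rw [mutualInfo, mutualInfo, h_entropy_W, h_entropy_XW]
  ring

end entropy

section product

variable {Ω ι α β : Type*} [Fintype Ω] [Fintype ι] [DecidableEq ι] [DecidableEq α]
  [DecidableEq β] {p : Ω → ℝ}

lemma sum_pi_filter_apply_eq_prod [Fintype α] (h : ι → α → ℝ) (h1 : ∀ k, ∑ a, h k a = 1)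
    (j : ι) (a : α) :
    ∑ f : ι → α with f j = a, ∏ k, h k (f k) = h j a := by
  rw [← Fintype.piFinset_univ, ← Fintype.piFinset_update_singleton_eq_filter_piFinset_eq
    (fun _ => univ) j (mem_univ a), ← prod_univ_sum,
    Fintype.prod_eq_single j fun k hk => by simp [hk, h1]]
  simp

variable (A : ι → Ω → α) (B : ι → Ω → β)

lemma pr_pi_eq_prod [Fintype β] (hp1 : ∑ ω, p ω = 1)
    (h : ∀ sa sb, pr p (fun ω => (fun i => A i ω, fun i => B i ω)) (sa, sb) =
      (∏ i, pr p (A i) (sa i)) * ∏ i, pr p (B i) (sb i)) (sa : ι → α) :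
    pr p (fun ω i => A i ω) sa = ∏ i, pr p (A i) (sa i) := by
  rw [← sum_pr_prod_mk_right (fun ω i => A i ω) (fun ω i => B i ω) sa]
  simp only [h, ← mul_sum, ← Fintype.prod_sum, sum_pr hp1, prod_const_one, mul_one]

lemma pr_prod_mk_eq_mul_of_pr_pi [Fintype α] [Fintype β] (hp1 : ∑ ω, p ω = 1)
    (h : ∀ sa sb, pr p (fun ω => (fun i => A i ω, fun i => B i ω)) (sa, sb) =
      (∏ i, pr p (A i) (sa i)) * ∏ i, pr p (B i) (sb i)) (j : ι) (a : α) (b : β) :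
    pr p (fun ω => (A j ω, B j ω)) (a, b) = pr p (A j) a * pr p (B j) b := by
  rw [pr_comp (fun ω => (fun i => A i ω, fun i => B i ω)) (fun v => (v.1 j, v.2 j))]
  simp only [Fintype.sum_prod_type, h, Prod.mk.injEq, ← ite_zero_mul_ite_zero, ← sum_mul_sum,
    ← sum_filter]
  rw [sum_pi_filter_apply_eq_prod _ (fun k => sum_pr hp1 (A k)),
    sum_pi_filter_apply_eq_prod _ (fun k => sum_pr hp1 (B k))]

end product

lemma sum_filter_sum_sub_eq_one {ι G : Type*} [Fintype ι] [DecidableEq ι] [Fintype G]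
    [DecidableEq G] [AddCommGroup G] (β : ι → G → ℝ) (hβ : ∀ j, ∑ u, β j u = 1) (s : G) :
    ∑ w : (ι → G) × G with ∑ j, w.1 j - w.2 = s, ∏ j, β j (w.1 j) = 1 := by
  simp only [sum_filter, Fintype.sum_prod_type, sub_eq_iff_comm, sum_ite_eq, mem_univ, if_true,
    ← Fintype.prod_sum, hβ, prod_const_one]

section masking

variable {Ω ι α G : Type*} [Fintype Ω] [Fintype ι] [DecidableEq ι] [Fintype α] [Fintype G]
  [DecidableEq α] [DecidableEq G] [AddCommGroup G] {p : Ω → ℝ}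
  {X : ι → Ω → α} {R : ι → Ω → G} {g : α → G}

lemma mul_pr_sub_eq_mul_pr_add (hp : ∀ ω, 0 ≤ p ω) (hp1 : ∑ ω, p ω = 1)
    (hindep : ∀ sx sr, pr p (fun ω => (fun i => X i ω, fun i => R i ω)) (sx, sr) =
      (∏ i, pr p (X i) (sx i)) * ∏ i, pr p (R i) (sr i))
    (hmask : ∀ i, mutualInfo p (X i) (fun ω => g (X i ω) + R i ω) = 0)
    (j : ι) (a : α) (u : G) :
    pr p (X j) a * pr p (R j) (u - g a) =
      pr p (X j) a * pr p (fun ω => g (X j ω) + R j ω) u := by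
  rw [← pr_prod_mk_eq_mul_of_pr_pi X R hp1 hindep,
    ← pr_prod_mk_eq_mul_of_mutualInfo_eq_zero hp hp1 (hmask j)]
  refine pr_congr fun ω => ?_
  simp only [Prod.mk.injEq, eq_sub_iff_add_eq']
  constructor <;> rintro ⟨rfl, h⟩ <;> exact ⟨rfl, h⟩

lemma pr_pi_masked_eq_prod (hp : ∀ ω, 0 ≤ p ω) (hp1 : ∑ ω, p ω = 1)
    (hindep : ∀ sx sr, pr p (fun ω => (fun i => X i ω, fun i => R i ω)) (sx, sr) =
      (∏ i, pr p (X i) (sx i)) * ∏ i, pr p (R i) (sr i))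
    (hmask : ∀ i, mutualInfo p (X i) (fun ω => g (X i ω) + R i ω) = 0)
    (sx : ι → α) (y : ι → G) :
    pr p (fun ω => (fun j => X j ω, fun j => g (X j ω) + R j ω)) (sx, y) =
      (∏ j, pr p (X j) (sx j)) * ∏ j, pr p (fun ω => g (X j ω) + R j ω) (y j) := by
  calc _ = pr p (fun ω => (fun j => X j ω, fun j => R j ω)) (sx, fun j => y j - g (sx j)) := by
        refine pr_congr fun ω => ?_
        simp only [Prod.mk.injEq, funext_iff, eq_sub_iff_add_eq']
        constructor <;> rintro ⟨h, h'⟩ <;> exact ⟨h, fun j => h j ▸ h' j⟩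
    _ = ∏ j, pr p (X j) (sx j) * pr p (R j) (y j - g (sx j)) := by
        rw [hindep, prod_mul_distrib]
    _ = _ := by
        simp only [mul_pr_sub_eq_mul_pr_add hp hp1 hindep hmask, prod_mul_distrib]

lemma pr_masked_observation_eq (hp : ∀ ω, 0 ≤ p ω) (hp1 : ∑ ω, p ω = 1)
    (hindep : ∀ sx sr, pr p (fun ω => (fun i => X i ω, fun i => R i ω)) (sx, sr) =
      (∏ i, pr p (X i) (sx i)) * ∏ i, pr p (R i) (sr i))
    (hmask : ∀ i, mutualInfo p (X i) (fun ω => g (X i ω) + R i ω) = 0)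
    (i : ι) (x : α) (y : ι → G) (t : G) :
    pr p (fun ω => (X i ω, ((fun j => g (X j ω) + R j ω, ∑ j, R j ω) : (ι → G) × G)))
        (x, y, t) =
      (∏ j, pr p (fun ω => g (X j ω) + R j ω) (y j)) *
        pr p (fun ω => (X i ω, ∑ j, g (X j ω))) (x, ∑ j, y j - t) := by
  -- this makes the observation a function of `(X, Y)`, whose law factors
  have hR : ∀ ω, ∑ j, R j ω = ∑ j, (g (X j ω) + R j ω) - ∑ j, g (X j ω) := fun ω => by
    rw [sum_add_distrib, add_sub_cancel_left]
  simp only [hR]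
  rw [pr_comp (fun ω => (fun j => X j ω, fun j => g (X j ω) + R j ω))
      (fun v => (v.1 i, v.2, ∑ j, v.2 j - ∑ j, g (v.1 j))),
    pr_comp (fun ω j => X j ω) (fun sx => (sx i, ∑ j, g (sx j))), mul_sum]
  simp only [Fintype.sum_prod_type, pr_pi_masked_eq_prod hp hp1 hindep hmask,
    pr_pi_eq_prod X R hp1 hindep, Prod.mk.injEq]
  refine sum_congr rfl fun sx _ => ?_
  have hsum : ∑ j, y j - ∑ j, g (sx j) = t ↔ ∑ j, g (sx j) = ∑ j, y j - t := by
    rw [sub_eq_iff_comm, eq_comm]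
  simp only [and_left_comm (b := _ = y), ite_and, sum_ite_eq', mem_univ, if_true, hsum]
  split_ifs <;> ring

end masking

theorem stmt_16 {Ω α G : Type*} [Fintype Ω] [Fintype α] [Fintype G]
    [DecidableEq α] [DecidableEq G] [AddCommGroup G]
    (n : ℕ)
    (p : Ω → ℝ) (hp : ∀ ω, 0 ≤ p ω) (hp1 : ∑ ω, p ω = 1)
    (X : Fin n → Ω → α) (R : Fin n → Ω → G) (g : α → G)
    (hindep : ∀ (sx : Fin n → α) (sr : Fin n → G),
      pr p (fun ω => ((fun i => X i ω, fun i => R i ω) : (Fin n → α) × (Fin n → G)))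
          (sx, sr) =
        (∏ i, pr p (X i) (sx i)) * ∏ i, pr p (R i) (sr i))
    (hmask : ∀ i, mutualInfo p (X i) (fun ω => g (X i ω) + R i ω) = 0) :
    ∀ i, mutualInfo p (X i)
        (fun ω => ((fun j => g (X j ω) + R j ω, ∑ j, R j ω) : (Fin n → G) × G)) =
      mutualInfo p (X i) (fun ω => ∑ j, g (X j ω)) := by
  intro i
  have hS : ∀ ω, ∑ j, (g (X j ω) + R j ω) - ∑ j, R j ω = ∑ j, g (X j ω) := fun ω => by
    rw [sum_add_distrib, add_sub_cancel_right]
  have h := mutualInfo_eq_of_pr_factor p (X i)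
    (fun ω => ((fun j => g (X j ω) + R j ω, ∑ j, R j ω) : (Fin n → G) × G))
    (fun w => ∑ j, w.1 j - w.2) (fun w => ∏ j, pr p (fun ω => g (X j ω) + R j ω) (w.1 j))
    (sum_filter_sum_sub_eq_one _ fun j => sum_pr hp1 _)
    (fun x w => by simpa only [hS] using pr_masked_observation_eq hp hp1 hindep hmask i x w.1 w.2)
  simpa only [hS] using h
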